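/- For (z₁,z₂) ∈ W, the image L(z₁,z₂) = log(z₁ e^{-i log|z₂|²}) + i log|z₂|² has real part Re L(z) = log|z₁| ∈ (-∞, log 2). Consequently, for any real c > log 2 and any m ∈ ℕ, the function z ↦ 1/(L(z) − c)^m is holomorphic and bounded on W. -/

import Mathlib

open Complex


/-- The unbounded non-smooth worm `W`. -/
def wormW : Set (ℂ × ℂ) :=
  {z | z.2 ≠ 0 ∧
    ‖z.1 - Complex.exp (Complex.I * (Real.log (‖z.2‖ ^ 2) : ℂ))‖ ^ 2 < 1}

/-- The function `L(z) = log(z₁ e^{-i log|z₂|²}) + i log|z₂|²`. -/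
noncomputable def Lfun (z : ℂ × ℂ) : ℂ :=
  Complex.log (z.1 * Complex.exp (-Complex.I * (Real.log (‖z.2‖ ^ 2) : ℂ))) +
    Complex.I * (Real.log (‖z.2‖ ^ 2) : ℂ)

lemma exp_cancel (t : ℝ) : Complex.exp (-I * t) * Complex.exp (I * t) = 1 := by
  rw [← Complex.exp_add]; simp

lemma branch_eq (w : ℂ) (θ θ₀ : ℝ)
    (hw : 0 < (w * Complex.exp (-I * θ)).re)
    (hw0 : 0 < (w * Complex.exp (-I * θ₀)).re)
    (hθ : |θ - θ₀| < Real.pi) :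
    Complex.log (w * Complex.exp (-I * θ)) + I * θ
      = Complex.log (w * Complex.exp (-I * θ₀)) + I * θ₀ := by
  have hne : w * Complex.exp (-I * θ) ≠ 0 := by
    intro h; rw [h] at hw; simp at hw
  have hne0 : w * Complex.exp (-I * θ₀) ≠ 0 := by
    intro h; rw [h] at hw0; simp at hw0
  have hw' : w ≠ 0 := (mul_ne_zero_iff.1 hne).1
  set A := Complex.log (w * Complex.exp (-I * θ)) + I * θ with hA
  set B := Complex.log (w * Complex.exp (-I * θ₀)) + I * θ₀ with hB
  have hexpA : Complex.exp A = w := by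
    rw [hA, Complex.exp_add, Complex.exp_log hne, mul_assoc, exp_cancel, mul_one]
  have hexpB : Complex.exp B = w := by
    rw [hB, Complex.exp_add, Complex.exp_log hne0, mul_assoc, exp_cancel, mul_one]
  have h1 : Complex.exp (A - B) = 1 := by
    rw [Complex.exp_sub, hexpA, hexpB, div_self hw']
  obtain ⟨n, hn⟩ := Complex.exp_eq_one_iff.1 h1
  have hIm : A.im - B.im = n * (2 * Real.pi) := by
    have := congrArg Complex.im hn
    simpa [Complex.sub_im, Complex.mul_im] using this
  have harg1 : |Complex.arg (w * Complex.exp (-I * θ))| < Real.pi / 2 :=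
    Complex.abs_arg_lt_pi_div_two_iff.2 (Or.inl hw)
  have harg2 : |Complex.arg (w * Complex.exp (-I * θ₀))| < Real.pi / 2 :=
    Complex.abs_arg_lt_pi_div_two_iff.2 (Or.inl hw0)
  have hAim : A.im = Complex.arg (w * Complex.exp (-I * θ)) + θ := by
    simp [hA, Complex.add_im, Complex.log_im, Complex.mul_im]
  have hBim : B.im = Complex.arg (w * Complex.exp (-I * θ₀)) + θ₀ := by
    simp [hB, Complex.add_im, Complex.log_im, Complex.mul_im]
  have hpi : (0:ℝ) < Real.pi := Real.pi_pos
  have hbound : |A.im - B.im| < 2 * Real.pi := by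
    rw [abs_lt]
    obtain ⟨a1, b1⟩ := abs_lt.1 harg1
    obtain ⟨a2, b2⟩ := abs_lt.1 harg2
    obtain ⟨a3, b3⟩ := abs_lt.1 hθ
    rw [hAim, hBim]
    constructor <;> linarith
  have hn0 : n = 0 := by
    rw [hIm, abs_mul, abs_of_pos (by positivity : (0:ℝ) < 2 * Real.pi)] at hbound
    have h3 : |(n:ℝ)| < 1 := by nlinarith
    obtain ⟨a, b⟩ := abs_lt.1 h3
    have a' : (-1:ℤ) < n := by exact_mod_cast a
    have b' : (n:ℤ) < 1 := by exact_mod_cast b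
    omega
  rw [hn0] at hn
  simp at hn
  exact sub_eq_zero.1 hn

noncomputable def thetaFun (z : ℂ × ℂ) : ℝ := Real.log (‖z.2‖ ^ 2)

lemma worm_abs_lt_one {z : ℂ × ℂ} (hz : z ∈ wormW) :
    ‖z.1 - Complex.exp (I * (thetaFun z : ℂ))‖ < 1 := by
  have h := hz.2
  simp only [thetaFun]
  have h0 : (0:ℝ) ≤ ‖z.1 - Complex.exp (I * ((Real.log (‖z.2‖ ^ 2) : ℝ) : ℂ))‖ :=
    norm_nonneg _
  nlinarith [h]

lemma worm_re_pos {z : ℂ × ℂ} (hz : z ∈ wormW) :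
    0 < (z.1 * Complex.exp (-I * (thetaFun z : ℂ))).re := by
  set θ := thetaFun z
  have habs1 : ‖Complex.exp (-I * (θ:ℂ))‖ = 1 := by
    rw [Complex.norm_exp]; norm_num
  have hfac : z.1 * Complex.exp (-I * (θ:ℂ)) - 1
      = Complex.exp (-I * (θ:ℂ)) * (z.1 - Complex.exp (I * (θ:ℂ))) := by
    rw [mul_sub]
    have : Complex.exp (-I * (θ:ℂ)) * Complex.exp (I * (θ:ℂ)) = 1 := by
      rw [← Complex.exp_add]; simp
    rw [this]; ring
  have habs : ‖z.1 * Complex.exp (-I * (θ:ℂ)) - 1‖ < 1 := by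
    rw [hfac, norm_mul, habs1, one_mul]
    exact worm_abs_lt_one hz
  have hre : |(z.1 * Complex.exp (-I * (θ:ℂ)) - 1).re| < 1 :=
    lt_of_le_of_lt (Complex.abs_re_le_norm _) habs
  have : (z.1 * Complex.exp (-I * (θ:ℂ)) - 1).re
      = (z.1 * Complex.exp (-I * (θ:ℂ))).re - 1 := by simp
  rw [this] at hre
  obtain ⟨a, _⟩ := abs_lt.1 hre
  linarith

lemma worm_z1_ne {z : ℂ × ℂ} (hz : z ∈ wormW) : z.1 ≠ 0 := by
  intro h
  have := worm_re_pos hz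
  rw [h] at this
  simp at this

lemma worm_abs_lt_two {z : ℂ × ℂ} (hz : z ∈ wormW) : ‖z.1‖ < 2 := by
  have h := worm_abs_lt_one hz
  have h1 : ‖Complex.exp (I * (thetaFun z : ℂ))‖ = 1 := by
    rw [Complex.norm_exp]; norm_num
  calc ‖z.1‖
      ≤ ‖z.1 - Complex.exp (I * (thetaFun z : ℂ))‖
        + ‖Complex.exp (I * (thetaFun z : ℂ))‖ := by
        simpa using norm_add_le (z.1 - Complex.exp (I * (thetaFun z : ℂ)))
          (Complex.exp (I * (thetaFun z : ℂ)))
    _ < 1 + 1 := by rw [h1]; linarith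
    _ = 2 := by norm_num

lemma Lfun_re {z : ℂ × ℂ} (hz : z ∈ wormW) :
    (Lfun z).re = Real.log (‖z.1‖) := by
  have hne : z.1 * Complex.exp (-I * ((thetaFun z : ℝ) : ℂ)) ≠ 0 :=
    mul_ne_zero (worm_z1_ne hz) (Complex.exp_ne_zero _)
  have : ‖z.1 * Complex.exp (-I * ((thetaFun z : ℝ) : ℂ))‖
      = ‖z.1‖ := by
    rw [norm_mul, Complex.norm_exp]; norm_num
  rw [Lfun]
  rw [Complex.add_re, Complex.log_re]
  simp only [thetaFun] at this
  rw [this]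
  simp

lemma thetaFun_continuousAt {z : ℂ × ℂ} (hz : z.2 ≠ 0) :
    ContinuousAt thetaFun z := by
  have h1 : ContinuousAt (fun z : ℂ × ℂ => ‖z.2‖ ^ 2) z :=
    ((continuous_norm.comp continuous_snd).pow 2).continuousAt
  have h2 : ‖z.2‖ ^ 2 ≠ 0 := by
    simp [hz]
  exact h1.log h2

lemma Lfun_differentiableOn : DifferentiableOn ℂ Lfun wormW := by
  intro z0 hz0
  apply DifferentiableAt.differentiableWithinAt
  set θ₀ := thetaFun z0 with hθ₀
  set F : ℂ × ℂ → ℂ := fun z =>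
    Complex.log (z.1 * Complex.exp (-I * (θ₀ : ℂ))) + I * (θ₀ : ℂ) with hF
  have hθc : ContinuousAt thetaFun z0 := thetaFun_continuousAt hz0.1
  have hgc : ContinuousAt (fun z : ℂ × ℂ =>
      (z.1 * Complex.exp (-I * ((thetaFun z : ℝ) : ℂ))).re) z0 := by
    apply Complex.continuous_re.continuousAt.comp
    exact (continuousAt_fst.mul
      (Complex.continuous_exp.continuousAt.comp
        ((continuousAt_const.mul
          ((Complex.continuous_ofReal.continuousAt.comp hθc))))))
  have hgc0 : ContinuousAt (fun z : ℂ × ℂ =>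
      (z.1 * Complex.exp (-I * (θ₀ : ℂ))).re) z0 :=
    Complex.continuous_re.continuousAt.comp (continuousAt_fst.mul continuousAt_const)
  have hpos : 0 < (z0.1 * Complex.exp (-I * ((thetaFun z0 : ℝ) : ℂ))).re :=
    worm_re_pos hz0
  have e1 : ∀ᶠ z in nhds z0, 0 < (z.1 * Complex.exp (-I * ((thetaFun z : ℝ) : ℂ))).re :=
    hgc.eventually (eventually_gt_nhds hpos)
  have e2 : ∀ᶠ z in nhds z0, 0 < (z.1 * Complex.exp (-I * (θ₀ : ℂ))).re :=
    hgc0.eventually (eventually_gt_nhds hpos)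
  have e3 : ∀ᶠ z in nhds z0, |thetaFun z - θ₀| < Real.pi := by
    have := hθc.eventually (Metric.ball_mem_nhds θ₀ Real.pi_pos)
    filter_upwards [this] with z hzb
    simpa [Real.dist_eq] using hzb
  have heq : Lfun =ᶠ[nhds z0] F := by
    filter_upwards [e1, e2, e3] with z h1 h2 h3
    exact branch_eq z.1 (thetaFun z) θ₀ h1 h2 h3
  have hFd : DifferentiableAt ℂ F z0 := by
    apply DifferentiableAt.add_const
    apply DifferentiableAt.clog
    · exact differentiableAt_fst.mul_const _
    · left
      exact worm_re_pos hz0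
  exact hFd.congr_of_eventuallyEq heq

theorem Lfun_re_and_reciprocal_power_bounded :
    (∀ z ∈ wormW, (Lfun z).re = Real.log (‖z.1‖) ∧
      Real.log (‖z.1‖) < Real.log 2) ∧
    ∀ c : ℝ, Real.log 2 < c → ∀ m : ℕ,
      DifferentiableOn ℂ (fun z => 1 / (Lfun z - (c : ℂ)) ^ m) wormW ∧
      ∃ M : ℝ, ∀ z ∈ wormW, ‖1 / (Lfun z - (c : ℂ)) ^ m‖ ≤ M := by
  have hloglt : ∀ z ∈ wormW, Real.log (‖z.1‖) < Real.log 2 := fun z hz =>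
    Real.log_lt_log (norm_pos_iff.mpr (worm_z1_ne hz)) (worm_abs_lt_two hz)
  refine ⟨fun z hz => ⟨Lfun_re hz, hloglt z hz⟩, ?_⟩
  intro c hc m
  have hb0 : 0 < c - Real.log 2 := sub_pos.2 hc
  have hre : ∀ z ∈ wormW, (Lfun z - (c:ℂ)).re = Real.log (‖z.1‖) - c := by
    intro z hz
    rw [Complex.sub_re, Lfun_re hz, Complex.ofReal_re]
  have hd : ∀ z ∈ wormW, Lfun z - (c:ℂ) ≠ 0 := by
    intro z hz h
    have h1 := hre z hz
    rw [h, Complex.zero_re] at h1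
    have := hloglt z hz
    linarith
  constructor
  · simp only [one_div]
    exact ((Lfun_differentiableOn.sub_const _).pow m).inv
      (fun z hz => pow_ne_zero m (hd z hz))
  · refine ⟨1 / (c - Real.log 2) ^ m, ?_⟩
    intro z hz
    have hb : c - Real.log 2 ≤ ‖Lfun z - (c:ℂ)‖ := by
      have h1 : |(Lfun z - (c:ℂ)).re| ≤ ‖Lfun z - (c:ℂ)‖ :=
        Complex.abs_re_le_norm _
      have h2 := hre z hz
      have h3 := hloglt z hz
      have h4 : -(Lfun z - (c:ℂ)).re ≤ |(Lfun z - (c:ℂ)).re| := neg_le_abs _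
      rw [h2] at h4 h1
      linarith
    rw [norm_div, norm_one, norm_pow]
    apply one_div_le_one_div_of_le (pow_pos hb0 m)
    exact pow_le_pow_left₀ hb0.le hb m
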